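/- For every n ≥ 1, every tuning parameter η_n > 0, every nonnegative real number c_n, and each estimator θ̂ that is one of θ̂_S, θ̂_H, θ̂_A, the one-sided intervals (−∞, θ̂ + c_n] and [θ̂ − c_n, ∞) both have infimal coverage probability inf_{θ∈ℝ} P_{n,θ}(θ belongs to the interval) equal to Φ(n^{1/2}(c_n − η_n)). -/

import Mathlib

open MeasureTheory ProbabilityTheory Filter
open scoped NNReal

/-- Standard normal cumulative distribution function Φ. -/
noncomputable def stdNormCDF (x : ℝ) : ℝ :=
  ((gaussianReal 0 1) (Set.Iic x)).toReal

/-- Soft-thresholding (LASSO) estimator with threshold η, as a function of ȳ. -/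
noncomputable def softThresh (η y : ℝ) : ℝ := Real.sign y * max (|y| - η) 0

/-- Hard-thresholding estimator with threshold η, as a function of ȳ. -/
noncomputable def hardThresh (η y : ℝ) : ℝ := if η < |y| then y else 0

/-- Adaptive LASSO estimator with tuning parameter η, as a function of ȳ. -/
noncomputable def adaLasso (η y : ℝ) : ℝ := if |y| ≤ η then 0 else y - η ^ 2 / y

/-- Coverage probability `P_{n,θ}(θ ∈ [est(ȳ) - a, est(ȳ) + b])` in the
known-variance case (σ = 1), where ȳ ~ N(θ, 1/n). -/
noncomputable def cover (n : ℕ) (est : ℝ → ℝ) (a b θ : ℝ) : ℝ :=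
  ((gaussianReal θ ((n : ℝ≥0))⁻¹)
    {y : ℝ | est y - a ≤ θ ∧ θ ≤ est y + b}).toReal

/-! Each of the three estimators satisfies `ȳ - η ≤ θ̂` and `0 < θ̂ → η < ȳ`. The first gives, for every
`θ`, coverage at least `P_θ(ȳ ≥ θ - c + η) = Φ(√n (c - η))`; the second bounds the coverage at `θ > c`
by `P_θ(ȳ ≥ η) = Φ(√n (θ - η))`, which tends to the same value as `θ ↓ c` by right-continuity of `Φ`.
The estimators are odd, so `y ↦ -y`, `θ ↦ -θ` turns the second interval into the first. -/

open Set

lemma stdNormCDF_eq_cdf (x : ℝ) : stdNormCDF x = cdf (gaussianReal 0 1) x := by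
  rw [cdf_eq_real, measureReal_def, stdNormCDF]

lemma continuousWithinAt_stdNormCDF_Ici (x : ℝ) : ContinuousWithinAt stdNormCDF (Ici x) x := by
  simpa only [funext stdNormCDF_eq_cdf] using (cdf (gaussianReal 0 1)).right_continuous x

lemma gaussianReal_map_standardize (μ : ℝ) {v : ℝ≥0} (hv : v ≠ 0) :
    (gaussianReal μ v).map (fun x ↦ (μ - x) / √v) = gaussianReal 0 1 := by
  rw [← Function.comp_def (· / √v) (μ - ·), ← Measure.map_map (by fun_prop) (by fun_prop),
    gaussianReal_map_const_sub, gaussianReal_map_div_const, sub_self, zero_div]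
  congr
  ext
  simp [hv]

lemma gaussianReal_Ici_toReal (μ : ℝ) {v : ℝ≥0} (hv : v ≠ 0) (a : ℝ) :
    (gaussianReal μ v (Ici a)).toReal = stdNormCDF ((μ - a) / √v) := by
  have hs : 0 < √(v : ℝ) := Real.sqrt_pos.2 (by positivity)
  have hpre : (fun x ↦ (μ - x) / √v) ⁻¹' Iic ((μ - a) / √v) = Ici a := by
    ext x
    simp only [mem_preimage, mem_Iic, mem_Ici, div_le_div_iff_of_pos_right hs, sub_le_sub_iff_left]
  rw [stdNormCDF, ← gaussianReal_map_standardize μ hv,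
    Measure.map_apply (by fun_prop) measurableSet_Iic, hpre]

lemma gaussianReal_inv_natCast_Ici_toReal {n : ℕ} (hn : n ≠ 0) (θ a : ℝ) :
    (gaussianReal θ (n : ℝ≥0)⁻¹ (Ici a)).toReal = stdNormCDF (√n * (θ - a)) := by
  rw [gaussianReal_Ici_toReal θ (by simpa using hn)]
  push_cast
  rw [Real.sqrt_inv, div_inv_eq_mul, mul_comm]

section Estimators

variable {η y : ℝ}

lemma sub_le_softThresh (hη : 0 ≤ η) (y : ℝ) : y - η ≤ softThresh η y := by
  rcases lt_trichotomy y 0 with hy | rfl | hy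
  · rw [softThresh, Real.sign_of_neg hy, abs_of_neg hy]
    have : max (-y - η) 0 ≤ η - y := max_le (by linarith) (by linarith)
    linarith
  · simp [softThresh, hη]
  · rw [softThresh, Real.sign_of_pos hy, abs_of_pos hy, one_mul]
    exact le_max_left _ _

lemma lt_of_softThresh_pos (h : 0 < softThresh η y) : η < y := by
  rcases lt_trichotomy y 0 with hy | rfl | hy
  · rw [softThresh, Real.sign_of_neg hy] at h
    linarith [le_max_right (|y| - η) 0]
  · simp [softThresh] at h
  · rw [softThresh, Real.sign_of_pos hy, abs_of_pos hy, one_mul] at h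
    exact sub_pos.1 ((lt_max_iff.1 h).resolve_right (lt_irrefl 0))

lemma softThresh_neg (η y : ℝ) : softThresh η (-y) = -softThresh η y := by
  rw [softThresh, softThresh, Real.sign_neg, abs_neg, neg_mul]

lemma sub_le_hardThresh (hη : 0 ≤ η) (y : ℝ) : y - η ≤ hardThresh η y := by
  unfold hardThresh
  split_ifs with h
  · linarith
  · linarith [le_abs_self y, not_lt.1 h]

lemma lt_of_hardThresh_pos (h : 0 < hardThresh η y) : η < y := by
  unfold hardThresh at h
  split_ifs at h with hηy
  · rwa [abs_of_pos h] at hηy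
  · exact absurd h (lt_irrefl 0)

lemma hardThresh_neg (η y : ℝ) : hardThresh η (-y) = -hardThresh η y := by
  unfold hardThresh
  rw [abs_neg]
  split_ifs <;> simp

lemma sub_le_adaLasso (hη : 0 ≤ η) (y : ℝ) : y - η ≤ adaLasso η y := by
  unfold adaLasso
  split_ifs with h
  · linarith [le_abs_self y]
  · rcases lt_or_gt_of_ne (show y ≠ 0 by rintro rfl; simp_all) with hy | hy
    · linarith [div_nonpos_of_nonneg_of_nonpos (sq_nonneg η) hy.le]
    · have : η ^ 2 / y ≤ η := by
        rw [div_le_iff₀ hy]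
        nlinarith [abs_of_pos hy]
      linarith

lemma lt_of_adaLasso_pos (h : 0 < adaLasso η y) : η < y := by
  unfold adaLasso at h
  split_ifs at h with hy
  · exact absurd h (lt_irrefl 0)
  · rcases lt_or_gt_of_ne (show y ≠ 0 by rintro rfl; simp_all) with hy0 | hy0
    · rw [abs_of_neg hy0, not_le] at hy
      have : y ^ 2 < η ^ 2 := by
        have := mul_lt_mul_of_neg_left h hy0
        rw [mul_sub, mul_div_cancel₀ _ hy0.ne] at this
        nlinarith
      nlinarith
    · rwa [abs_of_pos hy0, not_le] at hy

lemma adaLasso_neg (η y : ℝ) : adaLasso η (-y) = -adaLasso η y := by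
  unfold adaLasso
  rw [abs_neg]
  split_ifs
  · simp
  · rw [div_neg, neg_sub', sub_neg_eq_add]

end Estimators

section Coverage

variable {est : ℝ → ℝ}

theorem iInf_coverage_le_add_eq {n : ℕ} (hn : n ≠ 0) {η : ℝ} (hle : ∀ y, y - η ≤ est y)
    (hpos : ∀ y, 0 < est y → η < y) (c : ℝ) :
    ⨅ θ : ℝ, (gaussianReal θ (n : ℝ≥0)⁻¹ {y | θ ≤ est y + c}).toReal =
      stdNormCDF (√n * (c - η)) := by
  set F := fun θ : ℝ ↦ (gaussianReal θ (n : ℝ≥0)⁻¹ {y | θ ≤ est y + c}).toReal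
  have hlower : ∀ θ, stdNormCDF (√n * (c - η)) ≤ F θ := by
    intro θ
    calc stdNormCDF (√n * (c - η))
        = (gaussianReal θ (n : ℝ≥0)⁻¹ (Ici (θ - c + η))).toReal := by
          rw [gaussianReal_inv_natCast_Ici_toReal hn]
          ring_nf
      _ ≤ F θ := measureReal_mono fun y (hy : θ - c + η ≤ y) ↦ by
          show θ ≤ est y + c
          linarith [hle y]
  have hupper : ∀ θ ∈ Ioi c, ⨅ θ, F θ ≤ stdNormCDF (√n * (θ - η)) := by
    intro θ hθ
    calc ⨅ θ, F θ ≤ F θ := ciInf_le ⟨_, forall_mem_range.2 hlower⟩ θ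
      _ ≤ (gaussianReal θ (n : ℝ≥0)⁻¹ (Ici η)).toReal :=
          measureReal_mono fun y (hy : θ ≤ est y + c) ↦
            (hpos y (by linarith [mem_Ioi.1 hθ])).le
      _ = stdNormCDF (√n * (θ - η)) := gaussianReal_inv_natCast_Ici_toReal hn θ η
  have hcont : ContinuousWithinAt (fun θ ↦ stdNormCDF (√n * (θ - η))) (Ioi c) c :=
    (continuousWithinAt_stdNormCDF_Ici _).comp (by fun_prop : Continuous _).continuousWithinAt
      fun θ hθ ↦ mul_le_mul_of_nonneg_left (by linarith [mem_Ioi.1 hθ]) (Real.sqrt_nonneg _)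
  exact le_antisymm (ge_of_tendsto hcont (eventually_nhdsWithin_of_forall hupper))
    (le_ciInf hlower)

theorem iInf_coverage_sub_le_eq_iInf_le_add_of_odd (hodd : ∀ y, est (-y) = -est y) (v : ℝ≥0) (c : ℝ) :
    ⨅ θ : ℝ, (gaussianReal θ v {y | est y - c ≤ θ}).toReal =
      ⨅ θ : ℝ, (gaussianReal θ v {y | θ ≤ est y + c}).toReal := by
  have hreflect : ∀ θ, (gaussianReal θ v {y | est y - c ≤ θ}).toReal =
      (gaussianReal (-θ) v {y | -θ ≤ est y + c}).toReal := by
    intro θ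
    have hset : {y | est y - c ≤ θ} = Neg.neg ⁻¹' {y | -θ ≤ est y + c} := by
      ext y
      simp only [mem_ofPred_eq, mem_preimage, hodd]
      constructor <;> intro <;> linarith
    rw [hset, ← measurableEmbedding_neg.map_apply, gaussianReal_map_neg]
  simp_rw [hreflect]
  exact neg_surjective.iInf_comp fun θ ↦ (gaussianReal θ v {y | θ ≤ est y + c}).toReal

end Coverage

theorem stmt_5_general (n : ℕ) (hn : 1 ≤ n) (η c : ℝ) (hη : 0 < η)
    (est : ℝ → ℝ)
    (hest : est = softThresh η ∨ est = hardThresh η ∨ est = adaLasso η) :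
    (⨅ θ : ℝ, ((gaussianReal θ ((n : ℝ≥0))⁻¹) {y : ℝ | θ ≤ est y + c}).toReal) =
      stdNormCDF (Real.sqrt n * (c - η)) ∧
    (⨅ θ : ℝ, ((gaussianReal θ ((n : ℝ≥0))⁻¹) {y : ℝ | est y - c ≤ θ}).toReal) =
      stdNormCDF (Real.sqrt n * (c - η)) := by
  obtain ⟨hle, hpos, hodd⟩ : (∀ y, y - η ≤ est y) ∧ (∀ y, 0 < est y → η < y) ∧
      ∀ y, est (-y) = -est y := by
    rcases hest with rfl | rfl | rfl
    exacts [⟨sub_le_softThresh hη.le, fun _ ↦ lt_of_softThresh_pos, softThresh_neg η⟩,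
      ⟨sub_le_hardThresh hη.le, fun _ ↦ lt_of_hardThresh_pos, hardThresh_neg η⟩,
      ⟨sub_le_adaLasso hη.le, fun _ ↦ lt_of_adaLasso_pos, adaLasso_neg η⟩]
  have hcover := iInf_coverage_le_add_eq (Nat.one_le_iff_ne_zero.mp hn) hle hpos c
  exact ⟨hcover, (iInf_coverage_sub_le_eq_iInf_le_add_of_odd hodd _ c).trans hcover⟩

/-- Remark (iv): the one-sided intervals `(-∞, θ̂ + c]` and `[θ̂ - c, ∞)` based on any of
the soft-thresholding, hard-thresholding, or adaptive LASSO estimators have infimal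
coverage probability `Φ(√n (c - η))`. -/
theorem stmt_5 (n : ℕ) (hn : 1 ≤ n) (η c : ℝ) (hη : 0 < η) (hc : 0 ≤ c)
    (est : ℝ → ℝ)
    (hest : est = softThresh η ∨ est = hardThresh η ∨ est = adaLasso η) :
    (⨅ θ : ℝ, ((gaussianReal θ ((n : ℝ≥0))⁻¹) {y : ℝ | θ ≤ est y + c}).toReal) =
      stdNormCDF (Real.sqrt n * (c - η)) ∧
    (⨅ θ : ℝ, ((gaussianReal θ ((n : ℝ≥0))⁻¹) {y : ℝ | est y - c ≤ θ}).toReal) =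
      stdNormCDF (Real.sqrt n * (c - η)) :=
  stmt_5_general n hn η c hη est hest
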